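/- For Newton polygons N₁ and N₂ of finite area, h(N₁ * N₂) = 2·Vol(N₁^[1], N₂^[1]), where Vol(N₁^[1], N₂^[1]) is the mixed volume defined by Vol(λ₁N₁+λ₂N₂) = Vol(N₁)λ₁² + 2Vol(N₁^[1],N₂^[1])λ₁λ₂ + Vol(N₂)λ₂². -/

import Mathlib

/-!
Write `N_L = ∑_{(ℓ, h) ∈ L} [(0, h), (ℓ, 0)] + ℝ≥0²` for the Newton polygon with edge list `L`.
Its height is `∑ h`, so the height of `N_{L₁} * N_{L₂}` is
`c(L₁, L₂) = ∑_{p ∈ L₁, q ∈ L₂} min(ℓ_p h_q, ℓ_q h_p)`.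
List the edges by decreasing slope `h / ℓ`. Removing the steepest edge `(ℓ, h)` cuts the
complement of `N_L` into the trapezoid of area `ℓ H + ℓ h / 2` over `[0, ℓ)`, where `H` is the
height of the remaining polygon, and a translate of the complement of the remaining polygon;
hence `Vol(N_L) = c(L, L) / 2`. Since `λ₁ N_{L₁} + λ₂ N_{L₂}` is the Newton polygon of the
concatenation of the rescaled lists and `c` is symmetric and bilinear, expanding
`c(λ₁ L₁ ++ λ₂ L₂, λ₁ L₁ ++ λ₂ L₂) / 2` shows that the mixed volume is `c(L₁, L₂) / 2`.
-/

open Pointwise MeasureTheory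

/-- The positive quadrant in `ℝ²`. -/
def Q2 : Set (ℝ × ℝ) := {p | 0 ≤ p.1 ∧ 0 ≤ p.2}

/-- The elementary Newton polygon `{ℓ/h}`. -/
noncomputable def elemPoly (l h : ℝ) : Set (ℝ × ℝ) :=
  convexHull ℝ (({((0 : ℝ), h)} + Q2) ∪ ({(l, (0 : ℝ))} + Q2))

/-- The sum (convex hull of the Minkowski sum) of the elementary polygons listed in `L`. -/
noncomputable def sumList (L : List (ℝ × ℝ)) : Set (ℝ × ℝ) :=
  convexHull ℝ (Q2 + (L.map (fun p => elemPoly p.1 p.2)).sum)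

/-- The sum of two Newton polygons: convex hull of the Minkowski sum. -/
noncomputable def polySum (N₁ N₂ : Set (ℝ × ℝ)) : Set (ℝ × ℝ) :=
  convexHull ℝ (N₁ + N₂)

/-- The product of decompositions: on elementary polygons,
`{ℓ/h} * {ℓ'/h'} = {ℓℓ' / min(ℓh', ℓ'h)}`, extended bilinearly. -/
def prodList (L₁ L₂ : List (ℝ × ℝ)) : List (ℝ × ℝ) :=
  L₁.flatMap fun p => L₂.map fun q => (p.1 * q.1, min (p.1 * q.2) (q.1 * p.2))

/-- All lengths and heights in the list are positive. -/
def PosList (L : List (ℝ × ℝ)) : Prop := ∀ p ∈ L, 0 < p.1 ∧ 0 < p.2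

/-- The height of a Newton polygon: its intercept with the vertical axis. -/
noncomputable def polyHt (N : Set (ℝ × ℝ)) : ℝ := sInf {y | (0, y) ∈ N}

/-- The area enclosed by a Newton polygon: the area of the complement of the region in the
positive quadrant. -/
noncomputable def polyVol (N : Set (ℝ × ℝ)) : ℝ := (volume (Q2 \ N)).toReal

open Set

lemma Q2_eq_Ici : Q2 = Ici 0 := by
  ext z
  simp [Q2, Prod.le_def]

lemma mem_Q2 {z : ℝ × ℝ} : z ∈ Q2 ↔ 0 ≤ z := by
  rw [Q2_eq_Ici, mem_Ici]

lemma convex_Q2 : Convex ℝ Q2 := Q2_eq_Ici ▸ convex_Ici 0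

lemma isClosed_Q2 : IsClosed Q2 := Q2_eq_Ici ▸ isClosed_Ici

lemma Q2_add_Q2 : Q2 + Q2 = Q2 := by
  refine Subset.antisymm ?_ fun z hz => ⟨z, hz, 0, mem_Q2.2 le_rfl, add_zero z⟩
  rintro _ ⟨x, hx, y, hy, rfl⟩
  exact mem_Q2.2 (add_nonneg (mem_Q2.1 hx) (mem_Q2.1 hy))

lemma smul_Q2 {a : ℝ} (ha : 0 < a) : a • Q2 = Q2 := by
  refine Subset.antisymm ?_ fun z hz => ⟨a⁻¹ • z, ?_, smul_inv_smul₀ ha.ne' z⟩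
  · rintro _ ⟨z, hz, rfl⟩
    exact mem_Q2.2 (smul_nonneg ha.le (mem_Q2.1 hz))
  · exact mem_Q2.2 (smul_nonneg (inv_nonneg.2 ha.le) (mem_Q2.1 hz))

lemma volume_Q2 : volume Q2 = ⊤ := by
  have : Q2 = Ici 0 ×ˢ Ici 0 := by ext; rfl
  rw [this, Measure.volume_eq_prod, Measure.prod_prod, Real.volume_Ici]
  simp

-- the complement `Q2 \ {0}` has infinite area, which `toReal` sends to `0`
lemma polyVol_zero : polyVol 0 = 0 := by
  rw [polyVol, ← singleton_zero, measure_sdiff_null (measure_singleton 0), volume_Q2]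
  rfl

lemma polyVol_smul {a : ℝ} (ha : 0 ≤ a) {N : Set (ℝ × ℝ)} (hN : N.Nonempty) :
    polyVol (a • N) = a ^ 2 * polyVol N := by
  obtain rfl | ha := ha.eq_or_lt
  · rw [zero_smul_set hN, polyVol_zero]
    ring
  rw [polyVol, polyVol, ← smul_Q2 ha, ← smul_set_sdiff₀ ha.ne', Measure.addHaar_smul, smul_Q2 ha,
    ENNReal.toReal_mul, ENNReal.toReal_ofReal (abs_nonneg _)]
  simp

lemma volume_subgraph_Ico {s : Set ℝ} (hs : MeasurableSet s) {g : ℝ → ℝ} (hg : Measurable g) :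
    volume {z : ℝ × ℝ | z.1 ∈ s ∧ z.2 ∈ Ico 0 (g z.1)} = ∫⁻ x in s, ENNReal.ofReal (g x) := by
  rw [Measure.volume_eq_prod,
    Measure.prod_apply (measurableSet_region_between_co measurable_const hg hs),
    ← lintegral_indicator hs]
  congr 1 with x
  by_cases hx : x ∈ s
  · have : Prod.mk x ⁻¹' {z : ℝ × ℝ | z.1 ∈ s ∧ z.2 ∈ Ico 0 (g z.1)} = Ico 0 (g x) := by
      ext; simp [hx]
    rw [this, Real.volume_Ico, sub_zero, indicator_of_mem hx]
  · simp [hx, preimage]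

lemma integral_trapezoid {l : ℝ} (hl : 0 < l) (H h : ℝ) :
    ∫ x in (0 : ℝ)..l, (H + h * (1 - x / l)) = l * H + l * h / 2 := by
  have : (fun x => H + h * (1 - x / l)) = fun x => (H + h) - h / l * x := by ext; ring
  rw [this, intervalIntegral.integral_sub intervalIntegrable_const
    (intervalIntegral.intervalIntegrable_id.const_mul _), intervalIntegral.integral_const_mul,
    intervalIntegral.integral_const, integral_id, smul_eq_mul]
  field_simp
  ring

lemma volume_trapezoid {l : ℝ} (hl : 0 < l) {H h : ℝ} (hH : 0 ≤ H) (hh : 0 ≤ h) :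
    volume {z : ℝ × ℝ | z.1 ∈ Ico 0 l ∧ z.2 ∈ Ico 0 (H + h * (1 - z.1 / l))} =
      ENNReal.ofReal (l * H + l * h / 2) := by
  have hcont : Continuous fun x => H + h * (1 - x / l) := by fun_prop
  rw [volume_subgraph_Ico measurableSet_Ico hcont.measurable, ← ofReal_integral_eq_lintegral_ofReal,
    integral_Ico_eq_integral_Ioo, ← integral_Ioc_eq_integral_Ioo,
    ← intervalIntegral.integral_of_le hl.le, integral_trapezoid hl]
  · exact (hcont.integrableOn_Icc).mono_set Ico_subset_Icc_self
  · refine ae_restrict_of_forall_mem measurableSet_Ico fun x hx => ?_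
    have : x / l ≤ 1 := (div_le_one hl).2 hx.2.le
    simp only [Pi.zero_apply]
    nlinarith

noncomputable def edgeSeg (p : ℝ × ℝ) : Set (ℝ × ℝ) := convexHull ℝ {((0 : ℝ), p.2), (p.1, (0 : ℝ))}

noncomputable def newtonPoly (L : List (ℝ × ℝ)) : Set (ℝ × ℝ) := (L.map edgeSeg).sum + Q2

def totalHt (L : List (ℝ × ℝ)) : ℝ := (L.map Prod.snd).sum

lemma mem_edgeSeg {p z : ℝ × ℝ} :
    z ∈ edgeSeg p ↔ ∃ t ∈ Icc (0 : ℝ) 1, (t * p.1, (1 - t) * p.2) = z := by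
  simp [edgeSeg, convexHull_pair, segment_eq_image, Prod.ext_iff]

lemma top_mem_edgeSeg (p : ℝ × ℝ) : ((0 : ℝ), p.2) ∈ edgeSeg p :=
  subset_convexHull ℝ _ (mem_insert _ _)

lemma right_mem_edgeSeg (p : ℝ × ℝ) : (p.1, (0 : ℝ)) ∈ edgeSeg p :=
  subset_convexHull ℝ _ (mem_insert_of_mem _ rfl)

lemma smul_edgeSeg (a : ℝ) (p : ℝ × ℝ) : a • edgeSeg p = edgeSeg (a • p) := by
  rw [edgeSeg, edgeSeg, ← convexHull_smul, smul_set_insert, smul_set_singleton]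
  simp

lemma isCompact_edgeSeg (p : ℝ × ℝ) : IsCompact (edgeSeg p) :=
  (toFinite _).isCompact_convexHull ℝ

lemma newtonPoly_nil : newtonPoly [] = Q2 := by
  simp [newtonPoly]

lemma newtonPoly_cons (p : ℝ × ℝ) (L : List (ℝ × ℝ)) :
    newtonPoly (p :: L) = edgeSeg p + newtonPoly L := by
  simp [newtonPoly, add_assoc]

lemma newtonPoly_append (L M : List (ℝ × ℝ)) :
    newtonPoly (L ++ M) = newtonPoly L + newtonPoly M := by
  simp only [newtonPoly, List.map_append, List.sum_append]
  rw [add_add_add_comm, Q2_add_Q2]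

lemma newtonPoly_perm {L M : List (ℝ × ℝ)} (h : L.Perm M) : newtonPoly L = newtonPoly M := by
  rw [newtonPoly, newtonPoly, (h.map edgeSeg).sum_eq]

lemma convex_newtonPoly (L : List (ℝ × ℝ)) : Convex ℝ (newtonPoly L) := by
  refine (convex_list_sum fun s hs => ?_).add convex_Q2
  obtain ⟨p, -, rfl⟩ := List.mem_map.1 hs
  exact convex_convexHull ℝ _

lemma isClosed_newtonPoly (L : List (ℝ × ℝ)) : IsClosed (newtonPoly L) := by
  refine isClosed_Q2.add_left_of_isCompact ?_
  induction L with
  | nil => simp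
  | cons p L ih => simpa using (isCompact_edgeSeg p).add ih

lemma smul_newtonPoly {a : ℝ} (ha : 0 < a) (L : List (ℝ × ℝ)) :
    a • newtonPoly L = newtonPoly (L.map (a • ·)) := by
  simp [newtonPoly, smul_add, List.smul_sum, smul_Q2 ha, smul_edgeSeg, Function.comp_def]

lemma mem_newtonPoly_of_le {L : List (ℝ × ℝ)} {z w : ℝ × ℝ} (hz : z ∈ newtonPoly L)
    (hzw : z ≤ w) : w ∈ newtonPoly L := by
  obtain ⟨s, hs, c, hc, rfl⟩ := hz
  refine ⟨s, hs, c + (w - (s + c)), mem_Q2.2 ?_, by dsimp only; abel⟩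
  exact add_nonneg (mem_Q2.1 hc) (sub_nonneg.2 hzw)

lemma zero_totalHt_mem_newtonPoly (L : List (ℝ × ℝ)) :
    ((0 : ℝ), totalHt L) ∈ newtonPoly L := by
  induction L with
  | nil => simp [newtonPoly_nil, totalHt, Q2]
  | cons p L ih =>
    rw [newtonPoly_cons]
    exact ⟨_, top_mem_edgeSeg p, _, ih, by simp [totalHt]⟩

lemma elemPoly_eq (l h : ℝ) : elemPoly l h = edgeSeg (l, h) + Q2 := by
  rw [elemPoly, ← union_add, singleton_union, convexHull_add, convex_Q2.convexHull_eq]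
  rfl

lemma sumList_eq_newtonPoly (L : List (ℝ × ℝ)) : sumList L = newtonPoly L := by
  suffices h : Q2 + (L.map fun p => elemPoly p.1 p.2).sum = newtonPoly L by
    rw [sumList, h, (convex_newtonPoly L).convexHull_eq]
  induction L with
  | nil => simp [newtonPoly_nil]
  | cons p L ih =>
    rw [List.map_cons, List.sum_cons, elemPoly_eq, newtonPoly_cons, ← ih, add_assoc,
      add_left_comm, ← add_assoc Q2, Q2_add_Q2]

lemma totalHt_nonneg {L : List (ℝ × ℝ)} (hL : PosList L) : 0 ≤ totalHt L :=
  List.sum_nonneg (List.forall_mem_map.2 fun q hq => (hL q hq).2.le)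

lemma totalHt_cons (p : ℝ × ℝ) (L : List (ℝ × ℝ)) : totalHt (p :: L) = p.2 + totalHt L := by
  simp [totalHt]

section Slopes

variable {l h : ℝ} {L : List (ℝ × ℝ)}

lemma mul_totalHt_le_of_mem_newtonPoly (hl : 0 ≤ l) (hh : 0 ≤ h)
    (hs : ∀ q ∈ L, q.2 * l ≤ q.1 * h) {z : ℝ × ℝ} (hz : z ∈ newtonPoly L) :
    l * totalHt L ≤ h * z.1 + l * z.2 := by
  induction L generalizing z with
  | nil =>
    rw [newtonPoly_nil] at hz
    obtain ⟨hz1, hz2⟩ := hz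
    simp only [totalHt, List.map_nil, List.sum_nil, mul_zero]
    positivity
  | cons p L ih =>
    rw [newtonPoly_cons] at hz
    obtain ⟨_, hp, w, hw, rfl⟩ := hz
    obtain ⟨t, ⟨ht0, -⟩, rfl⟩ := mem_edgeSeg.1 hp
    have hw' := ih (fun q hq => hs q (List.mem_cons_of_mem _ hq)) hw
    have hp' := mul_le_mul_of_nonneg_left (hs p List.mem_cons_self) ht0
    simp only [totalHt_cons, Prod.fst_add, Prod.snd_add]
    nlinarith

lemma slide_mem_newtonPoly (hl : 0 < l) (hh : 0 ≤ h) (hs : ∀ q ∈ L, q.2 * l ≤ q.1 * h)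
    {z : ℝ × ℝ} (hz : z ∈ newtonPoly L) {u : ℝ} (hu : 0 ≤ u) (hul : u * l ≤ z.1) :
    (z.1 - u * l, z.2 + u * h) ∈ newtonPoly L := by
  obtain rfl | hu := hu.eq_or_lt
  · simpa using hz
  have hz1 : 0 < z.1 := (mul_pos hu hl).trans_le hul
  -- the slid point lies between `z` and the point where the slide meets the vertical axis
  have hP : ((0 : ℝ), z.2 + z.1 * h / l) ∈ newtonPoly L := by
    refine mem_newtonPoly_of_le (zero_totalHt_mem_newtonPoly L) (Prod.mk_le_mk.2 ⟨le_rfl, ?_⟩)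
    have := mul_totalHt_le_of_mem_newtonPoly hl.le hh hs hz
    rw [← mul_le_mul_iff_right₀ hl]
    field_simp
    linarith
  have ht : u * l / z.1 ∈ Icc (0 : ℝ) 1 := ⟨by positivity, (div_le_one hz1).2 hul⟩
  convert (convex_newtonPoly L).add_smul_sub_mem hz hP ht using 1
  ext
  · simp [sub_eq_add_neg, div_mul_cancel₀ _ hz1.ne']
  · simp only [Prod.snd_add, Prod.smul_snd, Prod.snd_sub, add_sub_cancel_left, smul_eq_mul,
      add_right_inj]
    field_simp

lemma mem_newtonPoly_cons_of_le (hl : 0 < l) {z : ℝ × ℝ} (hz1 : 0 ≤ z.1) (hzl : z.1 ≤ l)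
    (hz : l * (totalHt L + h) ≤ h * z.1 + l * z.2) : z ∈ newtonPoly ((l, h) :: L) := by
  set t := z.1 / l
  have htl : t * l = z.1 := div_mul_cancel₀ _ hl.ne'
  have ht : t ∈ Icc (0 : ℝ) 1 := ⟨by positivity, (div_le_one hl).2 hzl⟩
  rw [newtonPoly_cons]
  refine ⟨_, mem_edgeSeg.2 ⟨t, ht, rfl⟩, ((0 : ℝ), z.2 - (1 - t) * h), ?_, ?_⟩
  · refine mem_newtonPoly_of_le (zero_totalHt_mem_newtonPoly L) (Prod.mk_le_mk.2 ⟨le_rfl, ?_⟩)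
    have : l * (z.2 - (1 - t) * h) = h * z.1 + l * z.2 - l * h := by rw [← htl]; ring
    exact le_of_mul_le_mul_left (by linarith) hl
  · ext <;> simp [htl]

lemma mem_newtonPoly_cons_iff (hl : 0 < l) (hh : 0 ≤ h) (hs : ∀ q ∈ L, q.2 * l ≤ q.1 * h)
    {z : ℝ × ℝ} (hzl : l ≤ z.1) : z ∈ newtonPoly ((l, h) :: L) ↔ z - (l, 0) ∈ newtonPoly L := by
  rw [newtonPoly_cons]
  constructor
  · rintro ⟨_, hp, w, hw, rfl⟩
    obtain ⟨t, ⟨-, ht1⟩, rfl⟩ := mem_edgeSeg.1 hp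
    have hwl : (1 - t) * l ≤ w.1 := by rw [Prod.fst_add] at hzl; linarith
    convert slide_mem_newtonPoly hl hh hs hw (sub_nonneg.2 ht1) hwl using 1
    ext <;> simp only [Prod.fst_sub, Prod.fst_add, Prod.snd_sub, Prod.snd_add, sub_zero] <;> ring
  · exact fun hz => ⟨_, right_mem_edgeSeg (l, h), _, hz, add_sub_cancel _ _⟩

lemma Q2_diff_newtonPoly_cons (hl : 0 < l) (hh : 0 ≤ h) (hs : ∀ q ∈ L, q.2 * l ≤ q.1 * h) :
    Q2 \ newtonPoly ((l, h) :: L) =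
      {z | z.1 ∈ Ico 0 l ∧ z.2 ∈ Ico 0 (totalHt L + h * (1 - z.1 / l))} ∪
        ((l, (0 : ℝ)) +ᵥ (Q2 \ newtonPoly L)) := by
  have hs' : ∀ q ∈ (l, h) :: L, q.2 * l ≤ q.1 * h :=
    List.forall_mem_cons.2 ⟨(mul_comm h l).le, hs⟩
  ext z
  rw [mem_union, mem_vadd_set_iff_neg_vadd_mem, vadd_eq_add, neg_add_eq_sub]
  rcases lt_or_ge z.1 l with hzl | hzl
  · have hline : totalHt L + h * (1 - z.1 / l) ≤ z.2 ↔ l * (totalHt L + h) ≤ h * z.1 + l * z.2 := by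
      rw [← mul_le_mul_iff_right₀ hl]
      constructor <;> intro <;> field_simp at * <;> linarith
    have hmem : 0 ≤ z.1 → (z ∈ newtonPoly ((l, h) :: L) ↔
        totalHt L + h * (1 - z.1 / l) ≤ z.2) := fun hz1 => by
      rw [hline]
      refine ⟨fun hz => ?_, mem_newtonPoly_cons_of_le hl hz1 hzl.le⟩
      simpa [totalHt_cons, add_comm] using mul_totalHt_le_of_mem_newtonPoly hl.le hh hs' hz
    have hright : z - (l, 0) ∉ Q2 := fun h => by simp [Q2] at h; linarith
    simp only [mem_sdiff, hright, false_and, or_false, mem_ofPred_eq, mem_Ico, hzl, and_true]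
    constructor
    · rintro ⟨⟨hz1, hz2⟩, hz⟩
      exact ⟨hz1, hz2, lt_of_not_ge (mt (hmem hz1).2 hz)⟩
    · rintro ⟨hz1, hz2, hz⟩
      exact ⟨⟨hz1, hz2⟩, fun h => ((hmem hz1).1 h).not_gt hz⟩
  · have hQ : z ∈ Q2 ↔ z - (l, 0) ∈ Q2 := by
      simp only [Q2, mem_ofPred_eq, Prod.fst_sub, Prod.snd_sub, sub_zero, sub_nonneg]
      exact and_congr_left fun _ => ⟨fun _ => hzl, fun _ => hl.le.trans hzl⟩
    simp [mem_sdiff, hQ, mem_newtonPoly_cons_iff hl hh hs hzl, not_lt.2 hzl]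

lemma volume_Q2_diff_newtonPoly_cons (hl : 0 < l) (hh : 0 ≤ h) (hL : PosList L)
    (hs : ∀ q ∈ L, q.2 * l ≤ q.1 * h) :
    volume (Q2 \ newtonPoly ((l, h) :: L)) =
      ENNReal.ofReal (l * totalHt L + l * h / 2) + volume (Q2 \ newtonPoly L) := by
  have hdisj : Disjoint {z : ℝ × ℝ | z.1 ∈ Ico 0 l ∧ z.2 ∈ Ico 0 (totalHt L + h * (1 - z.1 / l))}
      ((l, (0 : ℝ)) +ᵥ (Q2 \ newtonPoly L)) := by
    refine disjoint_left.2 fun z hz hz' => ?_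
    rw [mem_vadd_set_iff_neg_vadd_mem] at hz'
    have : 0 ≤ -l + z.1 := hz'.1.1
    exact hz.1.2.not_ge (by linarith)
  rw [Q2_diff_newtonPoly_cons hl hh hs, measure_union hdisj
    ((isClosed_Q2.measurableSet.diff (isClosed_newtonPoly L).measurableSet).const_vadd _),
    measure_vadd, volume_trapezoid hl (totalHt_nonneg hL) hh]

end Slopes

lemma totalHt_le_of_mem_newtonPoly {L : List (ℝ × ℝ)} (hL : PosList L) {y : ℝ}
    (hy : ((0 : ℝ), y) ∈ newtonPoly L) : totalHt L ≤ y := by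
  have hslope : ∀ q ∈ L, 0 ≤ q.2 / q.1 := fun q hq => (div_pos (hL q hq).2 (hL q hq).1).le
  -- any `h` exceeding every slope will do
  set h := (L.map fun q => q.2 / q.1).sum
  have hs : ∀ q ∈ L, q.2 * 1 ≤ q.1 * h := fun q hq => by
    rw [mul_one, ← div_le_iff₀' (hL q hq).1]
    exact List.single_le_sum (List.forall_mem_map.2 hslope) _ (List.mem_map_of_mem hq)
  have hh : 0 ≤ h := List.sum_nonneg (List.forall_mem_map.2 hslope)
  simpa using mul_totalHt_le_of_mem_newtonPoly zero_le_one hh hs hy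

lemma polyHt_newtonPoly {L : List (ℝ × ℝ)} (hL : PosList L) :
    polyHt (newtonPoly L) = totalHt L := by
  have : {y : ℝ | ((0 : ℝ), y) ∈ newtonPoly L} = Ici (totalHt L) :=
    Subset.antisymm (fun y => totalHt_le_of_mem_newtonPoly hL) fun y hy =>
      mem_newtonPoly_of_le (zero_totalHt_mem_newtonPoly L) (Prod.mk_le_mk.2 ⟨le_rfl, hy⟩)
  rw [polyHt, this, csInf_Ici]

def elemCross (p q : ℝ × ℝ) : ℝ := min (p.1 * q.2) (q.1 * p.2)

def crossSum (L M : List (ℝ × ℝ)) : ℝ := (L.map fun p => (M.map (elemCross p)).sum).sum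

lemma elemCross_comm (p q : ℝ × ℝ) : elemCross p q = elemCross q p := min_comm _ _

lemma elemCross_smul {a b : ℝ} (ha : 0 ≤ a) (hb : 0 ≤ b) (p q : ℝ × ℝ) :
    elemCross (a • p) (b • q) = a * b * elemCross p q := by
  simp only [elemCross, mul_min_of_nonneg _ _ (mul_nonneg ha hb), Prod.smul_fst, Prod.smul_snd,
    smul_eq_mul]
  ring_nf

lemma crossSum_comm (L M : List (ℝ × ℝ)) : crossSum L M = crossSum M L := by
  simpa [crossSum, elemCross_comm] using
    Multiset.sum_map_sum_map (L : Multiset (ℝ × ℝ)) (M : Multiset (ℝ × ℝ)) (f := elemCross)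

lemma crossSum_cons_left (p : ℝ × ℝ) (L M : List (ℝ × ℝ)) :
    crossSum (p :: L) M = (M.map (elemCross p)).sum + crossSum L M := by
  simp [crossSum]

lemma crossSum_cons_self (p : ℝ × ℝ) (L : List (ℝ × ℝ)) :
    crossSum (p :: L) (p :: L) = elemCross p p + 2 * (L.map (elemCross p)).sum + crossSum L L := by
  rw [crossSum_cons_left, crossSum_comm L, crossSum_cons_left, crossSum_comm L]
  simp only [List.map_cons, List.sum_cons]
  ring

lemma crossSum_append_left (L L' M : List (ℝ × ℝ)) :
    crossSum (L ++ L') M = crossSum L M + crossSum L' M := by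
  simp [crossSum]

lemma crossSum_append_right (L M M' : List (ℝ × ℝ)) :
    crossSum L (M ++ M') = crossSum L M + crossSum L M' := by
  rw [crossSum_comm, crossSum_append_left, crossSum_comm M, crossSum_comm M']

lemma crossSum_map_smul {a b : ℝ} (ha : 0 ≤ a) (hb : 0 ≤ b) (L M : List (ℝ × ℝ)) :
    crossSum (L.map (a • ·)) (M.map (b • ·)) = a * b * crossSum L M := by
  simp [crossSum, Function.comp_def, elemCross_smul ha hb, List.sum_map_mul_left]

lemma crossSum_perm {L L' M M' : List (ℝ × ℝ)} (hL : L.Perm L') (hM : M.Perm M') :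
    crossSum L M = crossSum L' M' := by
  rw [crossSum, crossSum, (hL.map _).sum_eq]
  congr 1
  exact List.map_congr_left fun p _ => (hM.map _).sum_eq

lemma crossSum_nonneg {L M : List (ℝ × ℝ)} (hL : PosList L) (hM : PosList M) :
    0 ≤ crossSum L M :=
  List.sum_nonneg <| List.forall_mem_map.2 fun p hp => List.sum_nonneg <|
    List.forall_mem_map.2 fun q hq =>
      le_min (mul_pos (hL p hp).1 (hM q hq).2).le (mul_pos (hM q hq).1 (hL p hp).2).le

lemma totalHt_prodList (L M : List (ℝ × ℝ)) : totalHt (prodList L M) = crossSum L M := by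
  induction L with
  | nil => rfl
  | cons p L ih =>
    simp only [prodList, List.flatMap_cons] at ih ⊢
    simp only [totalHt, List.map_append, List.map_map, Function.comp_def, List.sum_append,
      crossSum_cons_left, ← ih]
    rfl

lemma posList_prodList {L M : List (ℝ × ℝ)} (hL : PosList L) (hM : PosList M) :
    PosList (prodList L M) := by
  simp only [PosList, prodList, List.mem_flatMap, List.mem_map]
  rintro _ ⟨p, hp, q, hq, rfl⟩
  exact ⟨mul_pos (hL p hp).1 (hM q hq).1,
    lt_min (mul_pos (hL p hp).1 (hM q hq).2) (mul_pos (hM q hq).1 (hL p hp).2)⟩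

lemma posList_map_smul {a : ℝ} (ha : 0 < a) {L : List (ℝ × ℝ)} (hL : PosList L) :
    PosList (L.map (a • ·)) := by
  simp only [PosList, List.forall_mem_map, Prod.smul_fst, Prod.smul_snd, smul_eq_mul]
  exact fun q hq => ⟨mul_pos ha (hL q hq).1, mul_pos ha (hL q hq).2⟩

lemma posList_append {L M : List (ℝ × ℝ)} (hL : PosList L) (hM : PosList M) :
    PosList (L ++ M) :=
  fun q hq => (List.mem_append.1 hq).elim (hL q) (hM q)

lemma volume_Q2_diff_newtonPoly_of_pairwise {L : List (ℝ × ℝ)} (hL : PosList L)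
    (hsort : L.Pairwise fun p q => q.2 / q.1 ≤ p.2 / p.1) :
    volume (Q2 \ newtonPoly L) = ENNReal.ofReal (crossSum L L / 2) := by
  induction L with
  | nil => simp [newtonPoly_nil, crossSum]
  | cons p L ih =>
    obtain ⟨l, h⟩ := p
    obtain ⟨hl, hh⟩ : 0 < l ∧ 0 < h := hL _ List.mem_cons_self
    have hL' : PosList L := fun q hq => hL q (List.mem_cons_of_mem _ hq)
    rw [List.pairwise_cons] at hsort
    have hs : ∀ q ∈ L, q.2 * l ≤ q.1 * h := fun q hq => by
      rw [mul_comm q.1, ← div_le_div_iff₀ (hL' q hq).1 hl]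
      exact hsort.1 q hq
    have hcross : (L.map (elemCross (l, h))).sum = l * totalHt L := by
      rw [totalHt, ← List.sum_map_mul_left]
      exact congrArg List.sum (List.map_congr_left fun q hq => min_eq_left (by linarith [hs q hq]))
    rw [volume_Q2_diff_newtonPoly_cons hl hh.le hL' hs, ih hL' hsort.2,
      ← ENNReal.ofReal_add (by nlinarith [totalHt_nonneg hL'])
        (by linarith [crossSum_nonneg hL' hL']),
      crossSum_cons_self, hcross]
    congr 1
    simp only [elemCross, min_self]
    ring

lemma polyVol_newtonPoly {L : List (ℝ × ℝ)} (hL : PosList L) :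
    polyVol (newtonPoly L) = crossSum L L / 2 := by
  set S := L.mergeSort fun p q => decide (q.2 / q.1 ≤ p.2 / p.1)
  have hperm : S.Perm L := List.mergeSort_perm _ _
  have hsort : S.Pairwise fun p q => q.2 / q.1 ≤ p.2 / p.1 := by
    simpa using List.pairwise_mergeSort (le := fun p q : ℝ × ℝ => decide (q.2 / q.1 ≤ p.2 / p.1))
      (fun a b c hab hbc => by simp only [decide_eq_true_eq] at *; linarith)
      (fun a b => by simpa using le_total _ _) L
  have hS : PosList S := fun q hq => hL q (hperm.subset hq)
  rw [polyVol, ← newtonPoly_perm hperm, ← crossSum_perm hperm hperm,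
    volume_Q2_diff_newtonPoly_of_pairwise hS hsort,
    ENNReal.toReal_ofReal (by linarith [crossSum_nonneg hS hS])]

lemma polyVol_polySum_smul_newtonPoly {L M : List (ℝ × ℝ)} (hL : PosList L) (hM : PosList M)
    {a b : ℝ} (ha : 0 ≤ a) (hb : 0 ≤ b) :
    polyVol (polySum (a • newtonPoly L) (b • newtonPoly M)) =
      polyVol (newtonPoly L) * a ^ 2 + crossSum L M * (a * b) + polyVol (newtonPoly M) * b ^ 2 := by
  have hne (L : List (ℝ × ℝ)) : (newtonPoly L).Nonempty := ⟨_, zero_totalHt_mem_newtonPoly L⟩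
  obtain rfl | ha := ha.eq_or_lt
  · rw [zero_smul_set (hne L), polySum, zero_add, ((convex_newtonPoly M).smul b).convexHull_eq,
      polyVol_smul hb (hne M)]
    ring
  obtain rfl | hb := hb.eq_or_lt
  · rw [zero_smul_set (hne M), polySum, add_zero, ((convex_newtonPoly L).smul a).convexHull_eq,
      polyVol_smul ha.le (hne L)]
    ring
  rw [polySum, smul_newtonPoly ha, smul_newtonPoly hb, ← newtonPoly_append,
    (convex_newtonPoly _).convexHull_eq,
    polyVol_newtonPoly (posList_append (posList_map_smul ha hL) (posList_map_smul hb hM)),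
    polyVol_newtonPoly hL, polyVol_newtonPoly hM, crossSum_append_left, crossSum_append_right,
    crossSum_append_right, crossSum_map_smul ha.le ha.le, crossSum_map_smul ha.le hb.le,
    crossSum_map_smul hb.le ha.le, crossSum_map_smul hb.le hb.le, crossSum_comm M L]
  ring

/-- For Newton polygons `N₁, N₂` of finite area, `h(N₁ * N₂) = 2·Vol(N₁^[1], N₂^[1])`, where
the mixed volume `v = Vol(N₁^[1], N₂^[1])` is characterized by
`Vol(λ₁N₁+λ₂N₂) = Vol(N₁)λ₁² + 2vλ₁λ₂ + Vol(N₂)λ₂²`. -/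
theorem polyHt_prod_eq_mixedVol (L₁ L₂ : List (ℝ × ℝ)) (h₁ : PosList L₁) (h₂ : PosList L₂)
    (N₁ N₂ : Set (ℝ × ℝ)) (hN₁ : N₁ = sumList L₁) (hN₂ : N₂ = sumList L₂) :
    ∃ v : ℝ,
      (∀ a b : ℝ, 0 ≤ a → 0 ≤ b →
        polyVol (polySum (a • N₁) (b • N₂)) =
          polyVol N₁ * a ^ 2 + 2 * v * (a * b) + polyVol N₂ * b ^ 2) ∧
      polyHt (sumList (prodList L₁ L₂)) = 2 * v := by
  rw [sumList_eq_newtonPoly] at hN₁ hN₂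
  subst hN₁ hN₂
  refine ⟨crossSum L₁ L₂ / 2, fun a b ha hb => ?_, ?_⟩
  · rw [polyVol_polySum_smul_newtonPoly h₁ h₂ ha hb]
    ring
  · rw [sumList_eq_newtonPoly, polyHt_newtonPoly (posList_prodList h₁ h₂), totalHt_prodList]
    ring
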